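/- arXiv:1511.00166 — 3 statements merged into one kernel-verified Lean document; each statement's English description precedes it below -/
import Mathlib

section
/- Let f be 2π-periodic and analytic with |f(t)| ≤ M in the open strip of half-width α > 0 around the real axis in the complex t-plane. Then the degree-n trigonometric projection f_n of f satisfies ‖f − f_n‖_∞ ≤ 2M e^{-αn} / (e^α − 1) for every n ≥ 0. -/
open Real

/-- The `k`-th Fourier coefficient `c_k = (1/2π) ∫_0^{2π} f(t) e^{-ikt} dt`
of a `2π`-periodic function `f`. -/
noncomputable def fourierCoefficient (f : ℝ → ℂ) (k : ℤ) : ℂ :=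
  (1 / (2 * (π : ℂ))) * ∫ t in (0 : ℝ)..(2 * π), f t * Complex.exp (-Complex.I * k * t)

/-- The degree-`n` trigonometric projection `f_n(t) = Σ_{k=-n}^n c_k e^{ikt}`. -/
noncomputable def trigProjection (f : ℝ → ℂ) (n : ℕ) (t : ℝ) : ℂ :=
  ∑ k ∈ Finset.Icc (-(n : ℤ)) n, fourierCoefficient f k * Complex.exp (Complex.I * k * t)

/-!
Shifting the contour of the coefficient integral from the real axis to `Im t = b` (the two
vertical sides cancel by periodicity) gives `|c_k| ≤ M e^{kb}` for every `|b| < α`, hence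
`|c_k| ≤ M e^{-α|k|}`. The coefficients are then summable, so the Fourier series converges to `f`
pointwise, and `f - f_n` is bounded by the two geometric tails
`2M Σ_{k>n} e^{-αk} = 2M e^{-αn} / (e^α - 1)`.
-/

open Complex
open scoped Interval

theorem intervalIntegral_eq_intervalIntegral_add_mul_I_of_periodic {g : ℂ → ℂ} {T b : ℝ}
    (hg : DifferentiableOn ℂ g ([[0, T]] ×ℂ [[0, b]]))
    (hper : ∀ y ∈ [[0, b]], g (T + y * I) = g (y * I)) :
    ∫ x in (0 : ℝ)..T, g x = ∫ x in (0 : ℝ)..T, g (x + b * I) := by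
  have h := integral_boundary_rect_eq_zero_of_differentiableOn g 0 (T + b * I) (by simpa using hg)
  simp only [zero_re, zero_im, add_re, add_im, ofReal_re, ofReal_im, mul_re, mul_im, I_re, I_im,
    ofReal_zero, zero_mul, add_zero, zero_add, mul_zero, mul_one, sub_self] at h
  rwa [intervalIntegral.integral_congr hper, add_sub_cancel_right, sub_eq_zero] at h

theorem exp_neg_I_mul_int_mul_add_two_pi (k : ℤ) (z : ℂ) :
    exp (-I * k * (z + 2 * π)) = exp (-I * k * z) := by
  rw [show -I * k * (z + 2 * π) = -I * k * z + (-k : ℤ) * (2 * π * I) by push_cast; ring,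
    Complex.exp_add, exp_int_mul_two_pi_mul_I, mul_one]

section StripBounds

variable {f : ℝ → ℂ} {F : ℂ → ℂ} {α M : ℝ}

theorem fourierCoefficient_eq_integral_add_mul_I (hext : ∀ t : ℝ, F t = f t)
    (hFper : ∀ z : ℂ, |z.im| < α → F (z + 2 * π) = F z)
    (hana : DifferentiableOn ℂ F {z : ℂ | |z.im| < α}) (k : ℤ) {b : ℝ} (hb : |b| < α) :
    fourierCoefficient f k =
      1 / (2 * π) * ∫ x in (0 : ℝ)..2 * π, F (x + b * I) * exp (-I * k * (x + b * I)) := by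
  have hstrip : ∀ y ∈ [[0, b]], |y| < α := fun y hy =>
    (by simpa using Set.abs_sub_left_of_mem_uIcc hy : |y| ≤ |b|).trans_lt hb
  have hrect : [[0, 2 * π]] ×ℂ [[0, b]] ⊆ {z : ℂ | |z.im| < α} := fun z hz => hstrip _ hz.2
  have hshift := intervalIntegral_eq_intervalIntegral_add_mul_I_of_periodic
    (g := fun z => F z * exp (-I * k * z)) (T := 2 * π) (b := b)
    ((hana.mono hrect).mul (by fun_prop))
    (fun y hy => by
      have hy' : |(y * I).im| < α := by simpa using hstrip y hy
      simp only [ofReal_mul, ofReal_ofNat]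
      rw [add_comm, hFper _ hy', exp_neg_I_mul_int_mul_add_two_pi])
  simp only [fourierCoefficient, ← hext]
  rw [hshift]

theorem norm_fourierCoefficient_le_mul_exp (hext : ∀ t : ℝ, F t = f t)
    (hFper : ∀ z : ℂ, |z.im| < α → F (z + 2 * π) = F z)
    (hana : DifferentiableOn ℂ F {z : ℂ | |z.im| < α})
    (hM : ∀ z : ℂ, |z.im| < α → ‖F z‖ ≤ M) (k : ℤ) {b : ℝ} (hb : |b| < α) :
    ‖fourierCoefficient f k‖ ≤ M * Real.exp (k * b) := by
  have hbound : ∀ x ∈ Ι (0 : ℝ) (2 * π),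
      ‖F (x + b * I) * exp (-I * k * (x + b * I))‖ ≤ M * Real.exp (k * b) := fun x _ => by
    have hre : (-I * k * (x + b * I)).re = k * b := by simp
    rw [norm_mul, norm_exp, hre]
    exact mul_le_mul_of_nonneg_right (hM _ (by simpa using hb)) (Real.exp_nonneg _)
  rw [fourierCoefficient_eq_integral_add_mul_I hext hFper hana k hb, norm_mul]
  calc ‖(1 / (2 * π) : ℂ)‖ * ‖∫ x in (0 : ℝ)..2 * π, F (x + b * I) * exp (-I * k * (x + b * I))‖
      ≤ (2 * π)⁻¹ * (M * Real.exp (k * b) * |2 * π - 0|) := by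
        gcongr
        · simp [abs_of_pos Real.pi_pos]
        · exact intervalIntegral.norm_integral_le_of_norm_le_const hbound
    _ = M * Real.exp (k * b) := by
        rw [sub_zero, abs_of_pos Real.two_pi_pos]
        field_simp

theorem norm_fourierCoefficient_le_mul_exp_neg_abs (hα : 0 < α) (hext : ∀ t : ℝ, F t = f t)
    (hFper : ∀ z : ℂ, |z.im| < α → F (z + 2 * π) = F z)
    (hana : DifferentiableOn ℂ F {z : ℂ | |z.im| < α})
    (hM : ∀ z : ℂ, |z.im| < α → ‖F z‖ ≤ M) (k : ℤ) :
    ‖fourierCoefficient f k‖ ≤ M * Real.exp (-α * |(k : ℝ)|) := by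
  -- the bound for `|b| < α` persists at `b = ±α` by continuity in `b`
  have hIcc : Set.Icc (-α) α ⊆ {b : ℝ | ‖fourierCoefficient f k‖ ≤ M * Real.exp (k * b)} := by
    rw [← closure_Ioo (by linarith : -α ≠ α)]
    exact (isClosed_le continuous_const (by fun_prop)).closure_subset_iff.2 fun b hb =>
      norm_fourierCoefficient_le_mul_exp hext hFper hana hM k (abs_lt.2 hb)
  rcases le_or_gt 0 (k : ℝ) with hk | hk
  · simpa [abs_of_nonneg hk, mul_comm] using hIcc ⟨le_rfl, by linarith⟩
  · simpa [abs_of_neg hk, mul_comm] using hIcc ⟨by linarith, le_rfl⟩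

end StripBounds

section FourierSeries

local instance : Fact (0 < 2 * π) := ⟨Real.two_pi_pos⟩

theorem fourier_coe_apply_two_pi (k : ℤ) (x : ℝ) :
    fourier k (x : AddCircle (2 * π)) = exp (I * k * x) := by
  rw [fourier_coe_apply]
  congr 1
  field_simp
  push_cast
  ring

theorem fourierCoeff_lift_eq_fourierCoefficient {f : ℝ → ℂ} (hper : Function.Periodic f (2 * π))
    (k : ℤ) : fourierCoeff hper.lift k = fourierCoefficient f k := by
  rw [fourierCoeff_eq_intervalIntegral _ k 0, zero_add, fourierCoefficient, Complex.real_smul]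
  congr 1
  · push_cast; rfl
  · refine intervalIntegral.integral_congr fun x _ => ?_
    rw [smul_eq_mul, fourier_coe_apply_two_pi, hper.lift_coe, mul_comm]
    push_cast
    ring_nf

theorem hasSum_fourierCoefficient_mul_exp {f : ℝ → ℂ} (hf : Continuous f)
    (hper : Function.Periodic f (2 * π)) (hsum : Summable (fourierCoefficient f)) (t : ℝ) :
    HasSum (fun k : ℤ => fourierCoefficient f k * exp (I * k * t)) (f t) := by
  let G : C(AddCircle (2 * π), ℂ) := ⟨hper.lift, hf.quotient_liftOn' _⟩
  have hG : fourierCoeff G = fourierCoefficient f :=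
    funext (fourierCoeff_lift_eq_fourierCoefficient hper)
  refine (has_pointwise_sum_fourier_series_of_summable (hG ▸ hsum) t).congr_fun fun k => ?_
  rw [hG, smul_eq_mul, fourier_coe_apply_two_pi]

end FourierSeries

theorem hasSum_ite_le_pow_succ {r : ℝ} (hr₀ : 0 ≤ r) (hr₁ : r < 1) (n : ℕ) :
    HasSum (fun j : ℕ => if n ≤ j then r ^ (j + 1) else 0) (r ^ (n + 1) / (1 - r)) := by
  rw [← hasSum_nat_add_iff' n, Finset.sum_eq_zero fun i hi => if_neg (by simpa using hi), sub_zero,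
    div_eq_mul_inv]
  refine ((hasSum_geometric_of_lt_one hr₀ hr₁).mul_left (r ^ (n + 1))).congr_fun fun j => ?_
  rw [if_pos (by omega), ← pow_add]
  ring_nf

theorem hasSum_pow_natAbs_compl_Icc {r : ℝ} (hr₀ : 0 ≤ r) (hr₁ : r < 1) (n : ℕ) :
    HasSum (fun k : {k : ℤ // k ∉ Finset.Icc (-(n : ℤ)) n} => r ^ (k : ℤ).natAbs)
      (2 * (r ^ (n + 1) / (1 - r))) := by
  have hmem : ∀ k : ℤ, k ∈ Finset.Icc (-(n : ℤ)) n ↔ k.natAbs ≤ n := fun k => by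
    rw [Finset.mem_Icc]; omega
  set g : ℤ → ℝ := fun k => if n < k.natAbs then r ^ k.natAbs else 0
  have hg : HasSum g (2 * (r ^ (n + 1) / (1 - r))) := by
    have hhalf := hasSum_ite_le_pow_succ hr₀ hr₁ n
    have hpos : ∀ j : ℕ, ((j : ℤ) + 1).natAbs = j + 1 := fun j => by omega
    have hneg : ∀ j : ℕ, (-((j : ℤ) + 1)).natAbs = j + 1 := fun j => by omega
    have hboth := HasSum.of_add_one_of_neg_add_one (f := g)
      (hhalf.congr_fun fun j => by simp only [g, hpos, Nat.lt_succ_iff])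
      (hhalf.congr_fun fun j => by simp only [g, hneg, Nat.lt_succ_iff])
    simpa [g, two_mul] using hboth
  refine ((Finset.hasSum_compl_iff (f := g) _).2 ?_).congr_fun fun k => ?_
  · rwa [Finset.sum_eq_zero fun k hk => if_neg (by simpa using (hmem k).1 hk), add_zero]
  · exact (if_pos (by simpa using mt (hmem k).2 k.2)).symm

theorem hasSum_exp_neg_mul_abs_compl_Icc {α : ℝ} (hα : 0 < α) (n : ℕ) :
    HasSum (fun k : {k : ℤ // k ∉ Finset.Icc (-(n : ℤ)) n} => Real.exp (-α * |((k : ℤ) : ℝ)|))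
      (2 * Real.exp (-α * n) / (Real.exp α - 1)) := by
  convert hasSum_pow_natAbs_compl_Icc (Real.exp_nonneg _)
    (Real.exp_lt_one_iff.2 (neg_neg_of_pos hα)) n using 1
  · ext k
    rw [← Real.exp_nat_mul, Nat.cast_natAbs, Int.cast_abs, mul_comm]
  · have hpow : Real.exp (-α) ^ (n + 1) = Real.exp (-α * n) * Real.exp (-α) := by
      rw [← Real.exp_nat_mul, ← Real.exp_add]
      push_cast
      ring_nf
    have hsub : 1 - Real.exp (-α) = (Real.exp α - 1) * Real.exp (-α) := by
      rw [sub_mul, ← Real.exp_add, add_neg_cancel, Real.exp_zero, one_mul]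
    rw [hpow, hsub, mul_div_mul_right _ _ (Real.exp_pos _).ne', mul_div_assoc]

theorem norm_sub_sum_le_of_hasSum {ι E : Type*} [NormedAddCommGroup E] {a : ι → E} {s : E}
    {B : ι → ℝ} {β : ℝ} (S : Finset ι) (ha : HasSum a s)
    (hB : HasSum (fun i : {i // i ∉ S} => B i) β) (hab : ∀ i ∉ S, ‖a i‖ ≤ B i) :
    ‖s - ∑ i ∈ S, a i‖ ≤ β :=
  ((S.hasSum_compl_iff).2 (by rwa [sub_add_cancel])).norm_le_of_bounded hB fun i => hab i i.2

/-- If `f` is `2π`-periodic and extends to a `2π`-periodic holomorphic function `F`,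
bounded by `M`, on the open strip of half-width `α > 0` around the real axis, then
its degree-`n` trigonometric projection satisfies
`‖f - f_n‖_∞ ≤ 2M e^{-αn} / (e^α - 1)` for every `n ≥ 0`. -/
theorem trigProjection_error_of_analytic_in_strip
    (f : ℝ → ℂ) (F : ℂ → ℂ) (α M : ℝ) (hα : 0 < α)
    (hper : ∀ t : ℝ, f (t + 2 * π) = f t)
    (hext : ∀ t : ℝ, F t = f t)
    (hFper : ∀ z : ℂ, |z.im| < α → F (z + 2 * π) = F z)
    (hana : DifferentiableOn ℂ F {z : ℂ | |z.im| < α})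
    (hM : ∀ z : ℂ, |z.im| < α → ‖F z‖ ≤ M) :
    ∀ n : ℕ, ∀ t : ℝ,
      ‖f t - trigProjection f n t‖ ≤
        2 * M * Real.exp (-α * n) / (Real.exp α - 1) := by
  intro n t
  have hf : Continuous f := by
    rw [show f = fun t : ℝ => F t from funext fun t => (hext t).symm]
    exact hana.continuousOn.comp_continuous continuous_ofReal fun t => by simpa using hα
  have hcoeff := norm_fourierCoefficient_le_mul_exp_neg_abs hα hext hFper hana hM
  have htail := (hasSum_exp_neg_mul_abs_compl_Icc hα n).mul_left M
  have hsum : Summable (fourierCoefficient f) :=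
    .of_norm_bounded ((Finset.summable_compl_iff _).1 htail.summable) hcoeff
  have hterm (k : ℤ) :
      ‖fourierCoefficient f k * exp (I * k * t)‖ ≤ M * Real.exp (-α * |(k : ℝ)|) := by
    rw [norm_mul, mul_assoc, ← ofReal_intCast, ← ofReal_mul, norm_exp_I_mul_ofReal, mul_one]
    exact hcoeff k
  calc ‖f t - trigProjection f n t‖
      ≤ M * (2 * Real.exp (-α * n) / (Real.exp α - 1)) :=
        norm_sub_sum_le_of_hasSum (Finset.Icc (-(n : ℤ)) n)
          (hasSum_fourierCoefficient_mul_exp hf hper hsum t) htail fun k _ => hterm k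
    _ = 2 * M * Real.exp (-α * n) / (Real.exp α - 1) := by ring
end

section
/- Let f be 2π-periodic and analytic with |f(t)| ≤ M in the open strip of half-width α > 0 around the real axis. Let I = ∫_0^{2π} f(t) dt and I_N the N-point periodic trapezoidal rule approximation. Then |I_N − I| ≤ 4πM / (e^{αN} − 1) for every N ≥ 1. -/
/-!
Shifting the contour of `∫ e^{-inz} F(z) dz` to the line `Im z = ∓β` (Cauchy's theorem; the
vertical sides cancel by periodicity) bounds the Fourier coefficients of `f` by
`|c_n| ≤ M e^{-β|n|}` for every `β < α`, hence by `M e^{-α|n|}`. Sampling at the `N` nodes aliases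
the Fourier series: `I_N = 2π Σ_m c_{mN}`, while `I = 2π c_0`, so
`|I_N - I| ≤ 2π Σ_{m ≠ 0} M e^{-αN|m|} = 4πM / (e^{αN} - 1)`.
-/

open Real
open scoped Interval Topology

open Complex in
theorem integral_add_mul_I_eq_of_periodic {E : Type*} [NormedAddCommGroup E] [NormedSpace ℂ E]
    [CompleteSpace E] {G : ℂ → E} {T s : ℝ}
    (hG : DifferentiableOn ℂ G ([[0, T]] ×ℂ [[0, s]]))
    (hper : ∀ y ∈ [[0, s]], G (T + y * I) = G (y * I)) :
    ∫ x in (0 : ℝ)..T, G (x + s * I) = ∫ x in (0 : ℝ)..T, G x := by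
  have hrect := integral_boundary_rect_eq_zero_of_differentiableOn G 0 (T + s * I)
    (by simpa using hG)
  have hvert : ∫ y in (0 : ℝ)..s, G (T + y * I) = ∫ y in (0 : ℝ)..s, G (y * I) :=
    intervalIntegral.integral_congr hper
  rw [eq_comm, ← sub_eq_zero]
  simpa [hvert] using hrect

theorem hasSum_pow_natAbs {r : ℝ} (hr₀ : 0 ≤ r) (hr₁ : r < 1) :
    HasSum (fun m : ℤ => r ^ m.natAbs) ((1 + r) / (1 - r)) := by
  have hpos := hasSum_geometric_of_lt_one hr₀ hr₁
  have hneg : HasSum (fun n : ℕ => r ^ (-((n : ℤ) + 1)).natAbs) (r * (1 - r)⁻¹) := by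
    have hterm (n : ℕ) : r ^ (-((n : ℤ) + 1)).natAbs = r * r ^ n := by
      rw [Int.natAbs_neg, ← pow_succ', ← Int.natAbs_natCast (n + 1), Nat.cast_succ]
    simpa only [hterm] using hpos.mul_left r
  have htot := HasSum.of_nat_of_neg_add_one (f := fun m : ℤ => r ^ m.natAbs)
    (by simpa only [Int.natAbs_natCast] using hpos) hneg
  convert htot using 1
  field_simp [(sub_pos.2 hr₁).ne']

theorem norm_sub_le_of_hasSum_int {E : Type*} [NormedAddCommGroup E] {a : ℤ → E} {S : E}
    {K r : ℝ} (hS : HasSum a S) (hr₀ : 0 ≤ r) (hr₁ : r < 1)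
    (ha : ∀ m ≠ 0, ‖a m‖ ≤ K * r ^ m.natAbs) :
    ‖S - a 0‖ ≤ 2 * K * r / (1 - r) := by
  have htail := hS.update 0 0
  have hbound := ((hasSum_pow_natAbs hr₀ hr₁).mul_left K).update 0 0
  rw [zero_sub, neg_add_eq_sub] at htail
  convert htail.norm_le_of_bounded hbound fun m => ?_ using 1
  · field_simp [(sub_pos.2 hr₁).ne']
    ring
  · rcases eq_or_ne m 0 with rfl | hm
    · simp
    · simpa [Function.update_of_ne hm] using ha m hm

theorem IsPrimitiveRoot.geom_sum_zpow {K : Type*} [Field K] {ζ : K} {N : ℕ}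
    (hζ : IsPrimitiveRoot ζ N) (k : ℤ) :
    ∑ j ∈ Finset.range N, (ζ ^ k) ^ j = if (N : ℤ) ∣ k then (N : K) else 0 := by
  split_ifs with hk
  · simp [(hζ.zpow_eq_one_iff_dvd k).2 hk]
  · have hne : ζ ^ k ≠ 1 := mt (hζ.zpow_eq_one_iff_dvd k).1 hk
    rw [geom_sum_eq hne, ← zpow_natCast, ← zpow_mul, mul_comm, zpow_mul, zpow_natCast,
      hζ.pow_eq_one, one_zpow, sub_self, zero_div]

theorem sum_fourier_natCast_mul_div {T : ℝ} (hT : T ≠ 0) {N : ℕ} (hN : N ≠ 0) (k : ℤ) :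
    ∑ j ∈ Finset.range N, fourier k ((T * j / N : ℝ) : AddCircle T)
      = if (N : ℤ) ∣ k then (N : ℂ) else 0 := by
  rw [← (Complex.isPrimitiveRoot_exp N hN).geom_sum_zpow k]
  refine Finset.sum_congr rfl fun j _ => ?_
  rw [fourier_coe_apply, ← Complex.exp_int_mul, ← Complex.exp_nat_mul]
  have hTC : (T : ℂ) ≠ 0 := by exact_mod_cast hT
  congr 1
  push_cast
  field_simp

theorem hasSum_fourierCoeff_mul_natCast {T : ℝ} [Fact (0 < T)] {g : C(AddCircle T, ℂ)}
    (hg : Summable (fourierCoeff g)) {N : ℕ} (hN : N ≠ 0) :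
    HasSum (fun m : ℤ => fourierCoeff g (m * N))
      ((N : ℂ)⁻¹ * ∑ j ∈ Finset.range N, g ((T * j / N : ℝ) : AddCircle T)) := by
  have hnodes := hasSum_sum fun j (_ : j ∈ Finset.range N) =>
    has_pointwise_sum_fourier_series_of_summable hg ((T * j / N : ℝ) : AddCircle T)
  simp only [smul_eq_mul, ← Finset.mul_sum,
    sum_fourier_natCast_mul_div (Fact.out : (0 : ℝ) < T).ne' hN] at hnodes
  have hinj : Function.Injective (fun m : ℤ => m * (N : ℤ)) :=
    mul_left_injective₀ (Int.natCast_ne_zero.2 hN)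
  have hsupp : ∀ k ∉ Set.range (fun m : ℤ => m * (N : ℤ)),
      fourierCoeff g k * (if (N : ℤ) ∣ k then (N : ℂ) else 0) = 0 := by
    rintro k hk
    rw [if_neg fun ⟨m, hm⟩ => hk ⟨m, by rw [hm, mul_comm]⟩, mul_zero]
  have hmult := ((hinj.hasSum_iff hsupp).2 hnodes).mul_left (N : ℂ)⁻¹
  have hNC : (N : ℂ) ≠ 0 := Nat.cast_ne_zero.2 hN
  simpa [Function.comp_def, mul_comm _ (N : ℂ), hNC] using hmult

section Strip

open Complex

variable {F : ℂ → ℂ} {α M : ℝ}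

instance inst_s8 : Fact (0 < 2 * π) := ⟨two_pi_pos⟩

theorem fourierCoeff_eq_integral_exp_mul {f : ℝ → ℂ} {g : AddCircle (2 * π) → ℂ}
    (hg : ∀ x : ℝ, g x = f x) (n : ℤ) :
    fourierCoeff g n = (2 * π : ℂ)⁻¹ * ∫ x in (0 : ℝ)..2 * π, exp (-(I * n * x)) * f x := by
  rw [fourierCoeff_eq_intervalIntegral g n 0, zero_add]
  have hπ : (π : ℂ) ≠ 0 := ofReal_ne_zero.2 pi_ne_zero
  simp only [fourier_coe_apply, hg, smul_eq_mul, Complex.real_smul]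
  congr 1
  · push_cast; ring
  · refine intervalIntegral.integral_congr fun x _ => ?_
    congr 2
    push_cast
    field_simp

theorem integral_eq_two_pi_mul_fourierCoeff_zero {f : ℝ → ℂ} {g : AddCircle (2 * π) → ℂ}
    (hg : ∀ x : ℝ, g x = f x) :
    ∫ x in (0 : ℝ)..2 * π, f x = 2 * π * fourierCoeff g 0 := by
  rw [fourierCoeff_eq_integral_exp_mul hg 0]
  field_simp
  simp

theorem reProdIm_uIcc_subset_strip {T s α : ℝ} (hs : |s| < α) :
    [[0, T]] ×ℂ [[0, s]] ⊆ {z : ℂ | |z.im| < α} := fun z hz =>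
  (by simpa using Set.abs_sub_left_of_mem_uIcc hz.2 : |z.im| ≤ |s|).trans_lt hs

theorem integral_exp_mul_add_mul_I_eq (hFper : ∀ z : ℂ, |z.im| < α → F (z + 2 * π) = F z)
    (hF : DifferentiableOn ℂ F {z : ℂ | |z.im| < α}) (n : ℤ) {s : ℝ} (hs : |s| < α) :
    ∫ x in (0 : ℝ)..2 * π, exp (-(I * n * (x + s * I))) * F (x + s * I) =
      ∫ x in (0 : ℝ)..2 * π, exp (-(I * n * x)) * F x := by
  refine integral_add_mul_I_eq_of_periodic (G := fun z => exp (-(I * n * z)) * F z) ?_ ?_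
  · exact ((Complex.differentiable_exp.comp (by fun_prop)).differentiableOn.mul hF).mono
      (reProdIm_uIcc_subset_strip hs)
  · intro y hy
    have hyα : |(y * I).im| < α := by
      simpa using (by simpa using Set.abs_sub_left_of_mem_uIcc hy : |y| ≤ |s|).trans_lt hs
    have hexp : exp (-(I * n * ((2 * π : ℝ) + y * I))) = exp (-(I * n * (y * I))) := by
      rw [show -(I * n * ((2 * π : ℝ) + y * I)) = -(I * n * (y * I)) + (-n : ℤ) * (2 * π * I) by
        push_cast; ring, Complex.exp_add, exp_int_mul_two_pi_mul_I, mul_one]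
    simp only [hexp]
    rw [← hFper _ hyα]
    push_cast
    ring_nf

theorem norm_integral_exp_mul_le (hFper : ∀ z : ℂ, |z.im| < α → F (z + 2 * π) = F z)
    (hF : DifferentiableOn ℂ F {z : ℂ | |z.im| < α}) (hM : ∀ z : ℂ, |z.im| < α → ‖F z‖ ≤ M)
    (n : ℤ) {s : ℝ} (hs : |s| < α) :
    ‖∫ x in (0 : ℝ)..2 * π, exp (-(I * n * x)) * F x‖ ≤ M * Real.exp (n * s) * (2 * π) := by
  rw [← integral_exp_mul_add_mul_I_eq hFper hF n hs]
  have hbound : ∀ x ∈ Ι (0 : ℝ) (2 * π),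
      ‖exp (-(I * n * (x + s * I))) * F (x + s * I)‖ ≤ M * Real.exp (n * s) := by
    intro x _
    rw [norm_mul, norm_exp, mul_comm]
    have hFx := hM (x + s * I) (by simpa using hs)
    refine mul_le_mul hFx (le_of_eq ?_) (by positivity) ((norm_nonneg _).trans hFx)
    simp
  simpa [abs_of_pos two_pi_pos] using intervalIntegral.norm_integral_le_of_norm_le_const hbound

theorem norm_fourierCoeff_le_of_strip (hα : 0 < α)
    (hFper : ∀ z : ℂ, |z.im| < α → F (z + 2 * π) = F z)
    (hF : DifferentiableOn ℂ F {z : ℂ | |z.im| < α}) (hM : ∀ z : ℂ, |z.im| < α → ‖F z‖ ≤ M)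
    {g : AddCircle (2 * π) → ℂ} (hg : ∀ x : ℝ, g x = F x) (n : ℤ) :
    ‖fourierCoeff g n‖ ≤ M * Real.exp (-α) ^ n.natAbs := by
  have hshift (s : ℝ) (hs : |s| < α) : ‖fourierCoeff g n‖ ≤ M * Real.exp (n * s) := by
    rw [fourierCoeff_eq_integral_exp_mul hg, norm_mul, norm_inv,
      show ‖(2 * π : ℂ)‖ = 2 * π by simpa using pi_pos.le]
    rw [inv_mul_le_iff₀ two_pi_pos]
    exact (norm_integral_exp_mul_le hFper hF hM n hs).trans_eq (mul_comm _ _)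
  have hdecay (β : ℝ) (hβ : |β| < α) : ‖fourierCoeff g n‖ ≤ M * Real.exp (-β * |(n : ℝ)|) := by
    rcases abs_choice (n : ℝ) with h | h <;> rw [h]
    · simpa [mul_comm] using hshift (-β) (by rwa [abs_neg])
    · simpa [mul_comm] using hshift β hβ
  have hlim : Filter.Tendsto (fun β : ℝ => M * Real.exp (-β * |(n : ℝ)|)) (𝓝[<] α)
      (𝓝 (M * Real.exp (-α * |(n : ℝ)|))) :=
    ((Continuous.tendsto (by fun_prop) α).mono_left nhdsWithin_le_nhds)
  rw [← Real.exp_nat_mul, Nat.cast_natAbs, Int.cast_abs, mul_comm _ (-α)]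
  refine ge_of_tendsto hlim ?_
  filter_upwards [Ioo_mem_nhdsLT (neg_lt_self hα)] with β hβ
  exact hdecay β (abs_lt.2 hβ)

end Strip

/-- If `f` is `2π`-periodic and extends to a `2π`-periodic holomorphic function `F`,
bounded by `M`, on the open strip of half-width `α > 0` around the real axis, then the
`N`-point periodic trapezoidal rule approximation `I_N = (2π/N) Σ_{j=0}^{N-1} f(2πj/N)`
to `I = ∫_0^{2π} f(t) dt` satisfies `|I_N - I| ≤ 4πM / (e^{αN} - 1)` for every `N ≥ 1`. -/
theorem trapezoidal_rule_error_of_analytic_in_strip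
    (f : ℝ → ℂ) (F : ℂ → ℂ) (α M : ℝ) (hα : 0 < α)
    (hper : ∀ t : ℝ, f (t + 2 * π) = f t)
    (hext : ∀ t : ℝ, F t = f t)
    (hFper : ∀ z : ℂ, |z.im| < α → F (z + 2 * π) = F z)
    (hana : DifferentiableOn ℂ F {z : ℂ | |z.im| < α})
    (hM : ∀ z : ℂ, |z.im| < α → ‖F z‖ ≤ M) :
    ∀ N : ℕ, 1 ≤ N →
      ‖(2 * π / N) * (∑ j ∈ Finset.range N, f (2 * π * j / N)) -
          ∫ t in (0 : ℝ)..(2 * π), f t‖ ≤ 4 * π * M / (Real.exp (α * N) - 1) := by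
  intro N hN
  have hN0 : N ≠ 0 := Nat.one_le_iff_ne_zero.1 hN
  have hf : Continuous f := by
    simpa [Function.comp_def, hext] using
      hana.continuousOn.comp_continuous Complex.continuous_ofReal (by simpa using hα)
  let g : C(AddCircle (2 * π), ℂ) := ⟨Function.Periodic.lift hper, hf.quotient_liftOn' _⟩
  have hg (x : ℝ) : g x = F x := (hext x).symm
  have hg' (x : ℝ) : g x = f x := rfl
  have hcoeff := norm_fourierCoeff_le_of_strip hα hFper hana hM hg
  have hr₁ : Real.exp (-α) < 1 := Real.exp_lt_one_iff.2 (neg_neg_of_pos hα)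
  have hsum : Summable (fourierCoeff g) :=
    .of_norm_bounded ((hasSum_pow_natAbs (Real.exp_pos _).le hr₁).summable.mul_left M) hcoeff
  have herr := norm_sub_le_of_hasSum_int (hasSum_fourierCoeff_mul_natCast hsum hN0)
    (pow_nonneg (Real.exp_pos _).le N) (pow_lt_one₀ (Real.exp_pos _).le hr₁ hN0) fun m _ => by
      simpa [Int.natAbs_mul, pow_mul'] using hcoeff (m * N)
  have hexp : Real.exp (-α) ^ N = (Real.exp (α * N))⁻¹ := by
    rw [← Real.exp_nat_mul, ← Real.exp_neg, mul_comm, neg_mul]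
  have hexp₁ : 1 < Real.exp (α * N) :=
    Real.one_lt_exp_iff.2 (mul_pos hα (Nat.cast_pos.2 (Nat.pos_of_ne_zero hN0)))
  calc ‖(2 * π / N) * (∑ j ∈ Finset.range N, f (2 * π * j / N)) - ∫ t in (0 : ℝ)..(2 * π), f t‖
      = 2 * π * ‖(N : ℂ)⁻¹ * ∑ j ∈ Finset.range N, f (2 * π * j / N) - fourierCoeff g 0‖ := by
        rw [integral_eq_two_pi_mul_fourierCoeff_zero hg', div_eq_mul_inv, mul_assoc, ← mul_sub,
          norm_mul]
        simp [pi_pos.le]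
    _ ≤ 2 * π * (2 * M * Real.exp (-α) ^ N / (1 - Real.exp (-α) ^ N)) := by
        gcongr; simpa [hg'] using herr
    _ = 4 * π * M / (Real.exp (α * N) - 1) := by
        rw [hexp]; field_simp [(sub_pos.2 hexp₁).ne']; ring
end

section
/- Let N = 2n+1 be odd, t_k = 2πk/N for 0 ≤ k ≤ N−1, and let p be the unique trigonometric polynomial of degree at most n interpolating values f_0, …, f_{N−1} at these points. Then for every t not equal to any t_k, p is given by the barycentric formula p(t) = [Σ_{k=0}^{N−1} (−1)^k f_k csc((t − t_k)/2)] / [Σ_{k=0}^{N−1} (−1)^k csc((t − t_k)/2)]; in particular the denominator is nonzero at such t. -/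
/-!
Put `z = exp (i t)` and `ζ = exp (2πi / N)`, so that the nodes are `exp (i t_k) = ζ ^ k`. The
half-angle form of the sine turns `(-1)^k csc ((t - t_k) / 2)` into
`2i exp (i t / 2) · ζ^(k(n+1)) / (z - ζ^k)`. Since `z^n p(t)` is a polynomial in `z` of degree
`< N` whose values at the `ζ^k` are `f_k ζ^(kn)`, its partial-fraction expansion over the `N`-th
roots of unity shows that the numerator equals `2i exp (i t / 2) · N z^n / (z^N - 1) · p(t)` and the
denominator the same factor without `p(t)`. That factor is nonzero as `t` is not a node, and the
quotient is `p(t)`.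
-/

open Real Finset Complex

namespace IsPrimitiveRoot

theorem geom_sum_pow_eq_ite {R : Type*} [CommRing R] [IsDomain R] {ζ : R} {N : ℕ}
    (hζ : IsPrimitiveRoot ζ N) (b : ℕ) :
    ∑ k ∈ range N, (ζ ^ b) ^ k = if N ∣ b then (N : R) else 0 := by
  split_ifs with hb
  · simp [(hζ.pow_eq_one_iff_dvd b).2 hb]
  · have hne : ζ ^ b - 1 ≠ 0 := sub_ne_zero.2 fun h => hb ((hζ.pow_eq_one_iff_dvd b).1 h)
    have := geom_sum_mul (ζ ^ b) N
    rw [← pow_mul, mul_comm b N, pow_mul, hζ.pow_eq_one, one_pow, sub_self] at this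
    exact (mul_eq_zero.1 this).resolve_right hne

variable {K : Type*} [Field K] {ζ z : K} {N : ℕ}

theorem sub_pow_ne_zero (hζ : IsPrimitiveRoot ζ N) (hz : z ^ N ≠ 1) (k : ℕ) : z - ζ ^ k ≠ 0 := by
  rw [sub_ne_zero]
  rintro rfl
  exact hz (by rw [← pow_mul, mul_comm, pow_mul, hζ.pow_eq_one, one_pow])

theorem sum_pow_succ_div_sub (hζ : IsPrimitiveRoot ζ N) (hz : z ^ N ≠ 1) {a : ℕ} (ha : a < N) :
    ∑ k ∈ range N, (ζ ^ k) ^ (a + 1) / (z - ζ ^ k) = N * z ^ a / (z ^ N - 1) := by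
  have hzN : z ^ N - 1 ≠ 0 := sub_ne_zero.2 hz
  have hquot : ∀ k, (ζ ^ k) ^ (a + 1) / (z - ζ ^ k) =
      (∑ j ∈ range N, z ^ j * (ζ ^ (a + N - j)) ^ k) / (z ^ N - 1) := by
    intro k
    rw [div_eq_div_iff (hζ.sub_pow_ne_zero hz k) hzN]
    have hgeom := geom_sum₂_mul z (ζ ^ k) N
    rw [← pow_mul, mul_comm k N, pow_mul, hζ.pow_eq_one, one_pow] at hgeom
    rw [← hgeom, ← mul_assoc, mul_sum]
    congr 1
    refine sum_congr rfl fun j hj => ?_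
    rw [show a + N - j = a + 1 + (N - 1 - j) by have := mem_range.1 hj; omega]
    ring
  have hdvd : ∀ j ∈ range N, N ∣ a + N - j ↔ j = a := by
    intro j hj
    have := mem_range.1 hj
    constructor
    · intro h
      have := Nat.eq_of_dvd_of_lt_two_mul (by omega) h (by omega)
      omega
    · rintro rfl
      simp
  calc ∑ k ∈ range N, (ζ ^ k) ^ (a + 1) / (z - ζ ^ k)
      = (∑ j ∈ range N, z ^ j * ∑ k ∈ range N, (ζ ^ (a + N - j)) ^ k) / (z ^ N - 1) := by
        simp_rw [hquot, ← sum_div, mul_sum]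
        rw [sum_comm]
    _ = (∑ j ∈ range N, if j = a then z ^ j * N else 0) / (z ^ N - 1) := by
        congr 1
        refine sum_congr rfl fun j hj => ?_
        rw [hζ.geom_sum_pow_eq_ite, if_congr (hdvd j hj) rfl rfl]
        split_ifs <;> simp
    _ = N * z ^ a / (z ^ N - 1) := by
        rw [sum_ite_eq', if_pos (mem_range.2 ha), mul_comm]

theorem sum_zpow_mul_pow_succ_div_sub (hζ : IsPrimitiveRoot ζ N) (hz : z ^ N ≠ 1) (hz0 : z ≠ 0)
    {n : ℕ} {m : ℤ} (hm : -n ≤ m) (hmN : m + n < N) :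
    ∑ k ∈ range N, (ζ ^ k) ^ m * (ζ ^ k) ^ (n + 1) / (z - ζ ^ k) =
      N * (z ^ n * z ^ m) / (z ^ N - 1) := by
  obtain ⟨a, ha⟩ : ∃ a : ℕ, m + n = a := ⟨(m + n).toNat, by omega⟩
  have hζ0 : ζ ≠ 0 := hζ.ne_zero (by omega)
  have hζk : ∀ k : ℕ, (ζ ^ k) ^ m * (ζ ^ k) ^ (n + 1) = (ζ ^ k) ^ (a + 1) := fun k => by
    rw [← zpow_natCast (ζ ^ k) (n + 1), ← zpow_add₀ (pow_ne_zero k hζ0),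
      ← zpow_natCast (ζ ^ k) (a + 1)]
    congr 1
    push_cast
    omega
  have hzn : z ^ n * z ^ m = z ^ a := by
    rw [← zpow_natCast z n, ← zpow_add₀ hz0, ← zpow_natCast z a]
    congr 1
    omega
  simp_rw [hζk, hzn]
  exact hζ.sum_pow_succ_div_sub hz (by omega)

theorem sum_laurent_mul_pow_succ_div_sub (hζ : IsPrimitiveRoot ζ N) (hz : z ^ N ≠ 1) (hz0 : z ≠ 0)
    {n : ℕ} (hn : 2 * n < N) (γ : ℤ → K) :
    ∑ k ∈ range N, (∑ m ∈ Icc (-n : ℤ) n, γ m * (ζ ^ k) ^ m) * (ζ ^ k) ^ (n + 1) / (z - ζ ^ k) =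
      N * z ^ n / (z ^ N - 1) * ∑ m ∈ Icc (-n : ℤ) n, γ m * z ^ m := by
  calc ∑ k ∈ range N, (∑ m ∈ Icc (-n : ℤ) n, γ m * (ζ ^ k) ^ m) * (ζ ^ k) ^ (n + 1) / (z - ζ ^ k)
      = ∑ m ∈ Icc (-n : ℤ) n,
          γ m * ∑ k ∈ range N, (ζ ^ k) ^ m * (ζ ^ k) ^ (n + 1) / (z - ζ ^ k) := by
        simp_rw [sum_mul, sum_div, mul_sum]
        rw [sum_comm]
        simp_rw [mul_assoc, mul_div_assoc]
    _ = ∑ m ∈ Icc (-n : ℤ) n, γ m * (N * (z ^ n * z ^ m) / (z ^ N - 1)) := by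
        refine sum_congr rfl fun m hm => ?_
        have := mem_Icc.1 hm
        rw [hζ.sum_zpow_mul_pow_succ_div_sub hz hz0 this.1 (by omega)]
    _ = N * z ^ n / (z ^ N - 1) * ∑ m ∈ Icc (-n : ℤ) n, γ m * z ^ m := by
        rw [mul_sum]
        exact sum_congr rfl fun m _ => by ring

end IsPrimitiveRoot

theorem Complex.ofReal_inv_sin_half_sub (t s : ℝ) :
    (((Real.sin ((t - s) / 2))⁻¹ : ℝ) : ℂ) =
      2 * I * exp (I * (t / 2)) * exp (I * (s / 2)) / (exp (I * t) - exp (I * s)) := by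
  have hsin : sin ((t - s) / 2) = exp (I * (s / 2)) / exp (I * (t / 2)) * I / 2
      - exp (I * (t / 2)) / exp (I * (s / 2)) * I / 2 := by
    rw [sin, show -((t - s) / 2 : ℂ) * I = I * (s / 2) - I * (t / 2) by ring,
      show ((t - s) / 2 : ℂ) * I = I * (t / 2) - I * (s / 2) by ring, exp_sub, exp_sub]
    ring
  have hsq : ∀ x : ℂ, exp (I * x) = exp (I * (x / 2)) ^ 2 := fun x => by
    rw [← exp_nat_mul]; congr 1; push_cast; ring
  push_cast
  rw [hsin, hsq t, hsq s]
  have hu0 := exp_ne_zero (I * (t / 2))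
  have hv0 := exp_ne_zero (I * (s / 2))
  generalize exp (I * (t / 2)) = u at hu0 ⊢
  generalize exp (I * (s / 2)) = v at hv0 ⊢
  rw [show v / u * I / 2 - u / v * I / 2 = -((u ^ 2 - v ^ 2) * I) / (2 * u * v) by
    field_simp; ring, inv_div, div_neg, div_mul_eq_div_div_swap, div_I]
  ring

theorem Complex.exp_I_mul_int_mul (m : ℤ) (x : ℂ) : exp (I * m * x) = exp (I * x) ^ m := by
  rw [← exp_int_mul]
  ring_nf

theorem Complex.exp_I_mul_two_pi_mul_div (N k : ℕ) :
    exp (I * ((2 * π * k / N : ℝ) : ℂ)) = exp (2 * π * I / N) ^ k := by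
  rw [← exp_nat_mul]
  push_cast
  ring_nf

theorem Complex.exp_I_mul_pow_ne_one {N : ℕ} (hN : N ≠ 0) {t : ℝ} (ht : t ∈ Set.Ico 0 (2 * π))
    (htk : ∀ j ∈ range N, t ≠ 2 * π * j / N) : exp (I * t) ^ N ≠ 1 := by
  intro h
  rw [← exp_nat_mul, exp_eq_one_iff] at h
  obtain ⟨m, hm⟩ := h
  have hNt : N * t = m * (2 * π) := by simpa using congrArg im hm
  have hNpos : (0 : ℝ) < N := by positivity
  obtain ⟨ht0, ht2π⟩ := ht
  have hm0 : 0 ≤ m := by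
    have : (0 : ℝ) ≤ m := by nlinarith [pi_pos]
    exact_mod_cast this
  lift m to ℕ using hm0
  push_cast at hNt
  have hmN : m < N := by
    have : (m : ℝ) < N := by nlinarith [pi_pos]
    exact_mod_cast this
  refine htk m (mem_range.2 hmN) ?_
  field_simp
  linarith

/-- On the odd grid `2πk/(2n+1)`, the sign `(-1)^k` merges with the half-angle factor
`exp (i t_k / 2)` into the power `exp (i t_k) ^ (n + 1)`. -/
theorem Complex.neg_one_pow_mul_inv_sin_half_sub (n k : ℕ) (t : ℝ) :
    (-1 : ℂ) ^ k * (((Real.sin ((t - 2 * π * k / (2 * n + 1)) / 2))⁻¹ : ℝ) : ℂ) =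
      2 * I * exp (I * (t / 2)) * exp (I * ((2 * π * k / (2 * n + 1) : ℝ) : ℂ)) ^ (n + 1) /
        (exp (I * t) - exp (I * ((2 * π * k / (2 * n + 1) : ℝ) : ℂ))) := by
  have hsign : (-1 : ℂ) ^ k * exp (I * ((2 * π * k / (2 * n + 1) : ℝ) / 2 : ℝ)) =
      exp (I * ((2 * π * k / (2 * n + 1) : ℝ) : ℂ)) ^ (n + 1) := by
    have hN : (2 * n + 1 : ℂ) ≠ 0 := by exact_mod_cast (2 * n).succ_ne_zero
    rw [← exp_pi_mul_I, ← exp_nat_mul, ← exp_nat_mul, ← exp_add]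
    congr 1
    push_cast
    field_simp
    ring
  rw [ofReal_inv_sin_half_sub, ← hsign]
  push_cast
  ring

/-- Barycentric formula for trigonometric interpolation in an odd number `N = 2n+1`
of equispaced points `t_k = 2πk/N`: if `p` is the trigonometric polynomial of degree
at most `n` with `p(t_k) = f_k` for `0 ≤ k ≤ N-1`, then for every `t ∈ [0, 2π)`
different from all the `t_k`,
`p(t) = [Σ_k (-1)^k f_k csc((t-t_k)/2)] / [Σ_k (-1)^k csc((t-t_k)/2)]`,
the denominator being nonzero. -/
theorem trig_barycentric_formula
    (n : ℕ) (fval : ℕ → ℂ) (p : ℝ → ℂ)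
    (hp : ∃ γ : ℤ → ℂ, ∀ t : ℝ,
      p t = ∑ k ∈ Finset.Icc (-(n : ℤ)) n, γ k * Complex.exp (Complex.I * k * t))
    (hinterp : ∀ j ∈ Finset.range (2 * n + 1),
      p (2 * π * j / (2 * n + 1)) = fval j)
    (t : ℝ) (ht : t ∈ Set.Ico (0 : ℝ) (2 * π))
    (htk : ∀ j ∈ Finset.range (2 * n + 1), t ≠ 2 * π * j / (2 * n + 1)) :
    (∑ k ∈ Finset.range (2 * n + 1),
        ((-1 : ℂ) ^ k * ((Real.sin ((t - 2 * π * k / (2 * n + 1)) / 2))⁻¹ : ℝ))) ≠ 0 ∧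
    p t = (∑ k ∈ Finset.range (2 * n + 1),
        (-1 : ℂ) ^ k * fval k * ((Real.sin ((t - 2 * π * k / (2 * n + 1)) / 2))⁻¹ : ℝ)) /
      (∑ k ∈ Finset.range (2 * n + 1),
        (-1 : ℂ) ^ k * ((Real.sin ((t - 2 * π * k / (2 * n + 1)) / 2))⁻¹ : ℝ)) := by
  obtain ⟨γ, hγ⟩ := hp
  set ζ := exp (2 * π * I / (2 * n + 1 : ℕ))
  have hζ : IsPrimitiveRoot ζ (2 * n + 1) := isPrimitiveRoot_exp _ (2 * n).succ_ne_zero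
  have hz : exp (I * t) ^ (2 * n + 1) ≠ 1 :=
    exp_I_mul_pow_ne_one (2 * n).succ_ne_zero ht (by exact_mod_cast htk)
  have hnode (k : ℕ) : exp (I * ((2 * π * k / (2 * n + 1) : ℝ) : ℂ)) = ζ ^ k := by
    rw [← exp_I_mul_two_pi_mul_div]
    push_cast
    rfl
  have hfval : ∀ k ∈ range (2 * n + 1), fval k = ∑ m ∈ Icc (-n : ℤ) n, γ m * (ζ ^ k) ^ m :=
    fun k hk => by simp_rw [← hinterp k hk, hγ, exp_I_mul_int_mul, hnode]
  have hpt : p t = ∑ m ∈ Icc (-n : ℤ) n, γ m * exp (I * t) ^ m := by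
    simp_rw [hγ, exp_I_mul_int_mul]
  have hterm (k : ℕ) := neg_one_pow_mul_inv_sin_half_sub n k t
  simp only [hnode] at hterm
  have hden := hζ.sum_pow_succ_div_sub hz (a := n) (by omega)
  have hnum := hζ.sum_laurent_mul_pow_succ_div_sub hz (exp_ne_zero _) (n := n) (by omega) γ
  rw [← hpt] at hnum
  set c := 2 * I * exp (I * (t / 2))
  set W := ((2 * n + 1 : ℕ) : ℂ) * exp (I * t) ^ n / (exp (I * t) ^ (2 * n + 1) - 1)
  have hcsc : ∑ k ∈ range (2 * n + 1),
      (-1 : ℂ) ^ k * ((Real.sin ((t - 2 * π * k / (2 * n + 1)) / 2))⁻¹ : ℝ) = c * W := by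
    simp_rw [hterm, mul_div_assoc, ← mul_sum, hden]
  have hfcsc : ∑ k ∈ range (2 * n + 1),
      (-1 : ℂ) ^ k * fval k * ((Real.sin ((t - 2 * π * k / (2 * n + 1)) / 2))⁻¹ : ℝ) =
        c * W * p t := by
    rw [mul_assoc, ← hnum, mul_sum]
    refine sum_congr rfl fun k hk => ?_
    rw [mul_right_comm, hterm, hfval k hk]
    ring
  have hcW : c * W ≠ 0 := by
    have hN : (2 * n + 1 : ℂ) ≠ 0 := by exact_mod_cast (2 * n).succ_ne_zero
    simp [c, W, Complex.exp_ne_zero, sub_ne_zero.2 hz, hN]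
  exact ⟨hcsc ▸ hcW, by rw [hfcsc, hcsc, mul_div_cancel_left₀ _ hcW]⟩
end
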